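/- Hyperbolic midpoint formula: for x, y ∈ B², the point m_H(x,y) = (y(1−|x|²) + x(1−|y|²)) / (1−|x|²|y|² + A[x,y]√((1−|x|²)(1−|y|²))), where A[x,y] = √(|x−y|² + (1−|x|²)(1−|y|²)), lies in B² and satisfies ρ(x, m_H(x,y)) = ρ(m_H(x,y), y) = ρ(x,y)/2. -/

import Mathlib

noncomputable def hypDist (x y : ℂ) : ℝ :=
  2 * Real.arsinh (‖x - y‖ /
    Real.sqrt ((1 - ‖x‖ ^ 2) * (1 - ‖y‖ ^ 2)))

/-!
Write `u = 1 - |x|²`, `v = 1 - |y|²`, `s = √(uv)` and `D = 1 - |x|²|y|² + A s`, so that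
`A² = |x - y|² + s²`. Direct expansion gives `1 - |m|² = 2 A s / D` and
`|x - m|² = A u (A - s) / D`, hence `sinh²(ρ(x,m)/2) = (A - s) / (2s)`, while
`sinh²(ρ(x,y)/2) = (A² - s²) / s²`. These two values are related by the doubling formula
`sinh² 2θ = 4 sinh² θ (1 + sinh² θ)`. The formula for `m` is symmetric in `x` and `y`, so the
second distance is the first one with `x` and `y` exchanged.
-/

open Real ComplexConjugate

noncomputable def hypSinhSqHalf (z w : ℂ) : ℝ :=
  ‖z - w‖ ^ 2 / ((1 - ‖z‖ ^ 2) * (1 - ‖w‖ ^ 2))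

theorem two_mul_arsinh (t : ℝ) : 2 * arsinh t = arsinh (2 * t * √(1 + t ^ 2)) := by
  have h := sinh_two_mul (arsinh t)
  rw [sinh_arsinh, cosh_arsinh] at h
  rw [← h, arsinh_sinh]

theorem two_mul_arsinh_sqrt {σ : ℝ} (hσ : 0 ≤ σ) :
    2 * arsinh √σ = arsinh √(4 * σ * (1 + σ)) := by
  rw [two_mul_arsinh, sq_sqrt hσ, sqrt_mul' _ (by linarith), sqrt_mul' _ hσ,
    show (4 : ℝ) = 2 ^ 2 by norm_num, sqrt_sq two_pos.le]

theorem hypDist_eq_two_mul_arsinh_sqrt (z w : ℂ) :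
    hypDist z w = 2 * arsinh √(hypSinhSqHalf z w) := by
  rw [hypDist, hypSinhSqHalf, sqrt_div (sq_nonneg _), sqrt_sq (norm_nonneg _)]

theorem hypDist_comm (z w : ℂ) : hypDist z w = hypDist w z := by
  rw [hypDist, hypDist, norm_sub_rev, mul_comm (1 - ‖z‖ ^ 2)]

theorem hypDist_eq_half_of_hypSinhSqHalf {x y z w : ℂ} (hzw : 0 ≤ hypSinhSqHalf z w)
    (h : 4 * hypSinhSqHalf z w * (1 + hypSinhSqHalf z w) = hypSinhSqHalf x y) :
    hypDist z w = hypDist x y / 2 := by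
  rw [hypDist_eq_two_mul_arsinh_sqrt, hypDist_eq_two_mul_arsinh_sqrt, two_mul_arsinh_sqrt hzw, h]
  ring

theorem one_sub_norm_sq_pos {z : ℂ} (hz : ‖z‖ < 1) : 0 < 1 - ‖z‖ ^ 2 :=
  sub_pos.2 ((sq_lt_one_iff₀ (norm_nonneg z)).2 hz)

theorem Complex.norm_sub_sq_eq (z w : ℂ) :
    ‖z - w‖ ^ 2 = ‖z‖ ^ 2 + ‖w‖ ^ 2 - 2 * (z * conj w).re := by
  simp only [Complex.sq_norm, Complex.normSq_sub]

theorem Complex.norm_mul_ofReal_add_mul_ofReal_sq (z w : ℂ) (p q : ℝ) :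
    ‖z * p + w * q‖ ^ 2 = p ^ 2 * ‖z‖ ^ 2 + 2 * p * q * (z * conj w).re + q ^ 2 * ‖w‖ ^ 2 := by
  simp only [Complex.sq_norm, Complex.normSq_apply, Complex.add_re, Complex.add_im,
    Complex.mul_re, Complex.mul_im, Complex.ofReal_re, Complex.ofReal_im,
    Complex.conj_re, Complex.conj_im]
  ring

/-- `m_H(x,y)` with the square roots `A[x,y]` and `√((1 - |x|²)(1 - |y|²))` abstracted as `A` and
`s`, so that the identities below are polynomial in `A` and `s` modulo their squares. -/
noncomputable def hypMidpoint (x y : ℂ) (A s : ℝ) : ℂ :=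
  (y * ((1 - ‖x‖ ^ 2 : ℝ) : ℂ) + x * ((1 - ‖y‖ ^ 2 : ℝ) : ℂ)) /
    ((1 - ‖x‖ ^ 2 * ‖y‖ ^ 2 + A * s : ℝ) : ℂ)

section Midpoint

variable {x y : ℂ} {A s : ℝ}

theorem hypMidpoint_comm : hypMidpoint y x A s = hypMidpoint x y A s := by
  rw [hypMidpoint, hypMidpoint, add_comm, mul_comm (‖y‖ ^ 2)]

theorem hypMidpoint_denom_pos (hx : ‖x‖ < 1) (hy : ‖y‖ < 1) (hs0 : 0 ≤ s) (hA0 : 0 ≤ A) :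
    0 < 1 - ‖x‖ ^ 2 * ‖y‖ ^ 2 + A * s := by
  have : ‖x‖ ^ 2 * ‖y‖ ^ 2 < 1 :=
    mul_lt_one_of_nonneg_of_lt_one_left (by positivity) (sub_pos.1 (one_sub_norm_sq_pos hx))
      (sub_pos.1 (one_sub_norm_sq_pos hy)).le
  nlinarith [mul_nonneg hA0 hs0]

theorem norm_sq_hypMidpoint_numerator (hs : s ^ 2 = (1 - ‖x‖ ^ 2) * (1 - ‖y‖ ^ 2))
    (hA : A ^ 2 = ‖x - y‖ ^ 2 + s ^ 2) :
    ‖y * ((1 - ‖x‖ ^ 2 : ℝ) : ℂ) + x * ((1 - ‖y‖ ^ 2 : ℝ) : ℂ)‖ ^ 2 =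
      (1 - ‖x‖ ^ 2 * ‖y‖ ^ 2 + A * s) ^ 2 - 2 * A * s * (1 - ‖x‖ ^ 2 * ‖y‖ ^ 2 + A * s) := by
  rw [add_comm, Complex.norm_mul_ofReal_add_mul_ofReal_sq]
  have hc := Complex.norm_sub_sq_eq x y
  linear_combination A ^ 2 * hs + (1 - ‖x‖ ^ 2) * (1 - ‖y‖ ^ 2) * (hA + hs + hc)

theorem norm_sq_sub_hypMidpoint_numerator (hs : s ^ 2 = (1 - ‖x‖ ^ 2) * (1 - ‖y‖ ^ 2))
    (hA : A ^ 2 = ‖x - y‖ ^ 2 + s ^ 2) :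
    ‖x * ((‖y‖ ^ 2 * (1 - ‖x‖ ^ 2) + A * s : ℝ) : ℂ) + y * ((-(1 - ‖x‖ ^ 2) : ℝ) : ℂ)‖ ^ 2 =
      A * (1 - ‖x‖ ^ 2) * (A - s) * (1 - ‖x‖ ^ 2 * ‖y‖ ^ 2 + A * s) := by
  rw [Complex.norm_mul_ofReal_add_mul_ofReal_sq]
  have hc := Complex.norm_sub_sq_eq x y
  set a := ‖x‖ ^ 2
  set b := ‖y‖ ^ 2
  linear_combination A ^ 2 * hs + (-(s * A) - b + a * s * A + 2 * a * b - a ^ 2 * b) * (hA + hs + hc)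

theorem one_sub_norm_hypMidpoint_sq (hx : ‖x‖ < 1) (hy : ‖y‖ < 1) (hs0 : 0 ≤ s) (hA0 : 0 ≤ A)
    (hs : s ^ 2 = (1 - ‖x‖ ^ 2) * (1 - ‖y‖ ^ 2)) (hA : A ^ 2 = ‖x - y‖ ^ 2 + s ^ 2) :
    1 - ‖hypMidpoint x y A s‖ ^ 2 = 2 * A * s / (1 - ‖x‖ ^ 2 * ‖y‖ ^ 2 + A * s) := by
  have hD := hypMidpoint_denom_pos hx hy hs0 hA0
  rw [hypMidpoint, norm_div, Complex.norm_real, norm_of_nonneg hD.le, div_pow,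
    norm_sq_hypMidpoint_numerator hs hA]
  field_simp
  ring

theorem norm_sub_hypMidpoint_sq (hx : ‖x‖ < 1) (hy : ‖y‖ < 1) (hs0 : 0 ≤ s) (hA0 : 0 ≤ A)
    (hs : s ^ 2 = (1 - ‖x‖ ^ 2) * (1 - ‖y‖ ^ 2)) (hA : A ^ 2 = ‖x - y‖ ^ 2 + s ^ 2) :
    ‖x - hypMidpoint x y A s‖ ^ 2 =
      A * (1 - ‖x‖ ^ 2) * (A - s) / (1 - ‖x‖ ^ 2 * ‖y‖ ^ 2 + A * s) := by
  have hD : ((1 - ‖x‖ ^ 2 * ‖y‖ ^ 2 + A * s : ℝ) : ℂ) ≠ 0 := by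
    exact_mod_cast (hypMidpoint_denom_pos hx hy hs0 hA0).ne'
  have hxm : x - hypMidpoint x y A s =
      (x * ((‖y‖ ^ 2 * (1 - ‖x‖ ^ 2) + A * s : ℝ) : ℂ) + y * ((-(1 - ‖x‖ ^ 2) : ℝ) : ℂ)) /
        ((1 - ‖x‖ ^ 2 * ‖y‖ ^ 2 + A * s : ℝ) : ℂ) := by
    rw [hypMidpoint, eq_div_iff hD, sub_mul, div_mul_cancel₀ _ hD]
    push_cast
    ring
  rw [hxm, norm_div, Complex.norm_real, norm_of_nonneg (hypMidpoint_denom_pos hx hy hs0 hA0).le,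
    div_pow, norm_sq_sub_hypMidpoint_numerator hs hA]
  field_simp

theorem norm_hypMidpoint_lt_one (hx : ‖x‖ < 1) (hy : ‖y‖ < 1) (hs0 : 0 < s) (hA0 : 0 ≤ A)
    (hs : s ^ 2 = (1 - ‖x‖ ^ 2) * (1 - ‖y‖ ^ 2)) (hA : A ^ 2 = ‖x - y‖ ^ 2 + s ^ 2) :
    ‖hypMidpoint x y A s‖ < 1 := by
  have hD := hypMidpoint_denom_pos hx hy hs0.le hA0
  have hApos : 0 < A := by nlinarith [sq_nonneg ‖x - y‖]
  have h := one_sub_norm_hypMidpoint_sq hx hy hs0.le hA0 hs hA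
  have : 0 < 2 * A * s / (1 - ‖x‖ ^ 2 * ‖y‖ ^ 2 + A * s) := by positivity
  exact (sq_lt_one_iff₀ (norm_nonneg _)).1 (by linarith)

theorem hypSinhSqHalf_eq_of_sq_eq (hs0 : s ≠ 0) (hs : s ^ 2 = (1 - ‖x‖ ^ 2) * (1 - ‖y‖ ^ 2))
    (hA : A ^ 2 = ‖x - y‖ ^ 2 + s ^ 2) :
    hypSinhSqHalf x y = (A - s) * (A + s) / s ^ 2 := by
  rw [hypSinhSqHalf, ← hs, div_left_inj' (pow_ne_zero 2 hs0)]
  linear_combination -hA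

theorem hypSinhSqHalf_left_hypMidpoint (hx : ‖x‖ < 1) (hy : ‖y‖ < 1) (hs0 : 0 < s)
    (hA0 : 0 ≤ A) (hs : s ^ 2 = (1 - ‖x‖ ^ 2) * (1 - ‖y‖ ^ 2))
    (hA : A ^ 2 = ‖x - y‖ ^ 2 + s ^ 2) :
    hypSinhSqHalf x (hypMidpoint x y A s) = (A - s) / (2 * s) := by
  have hD := hypMidpoint_denom_pos hx hy hs0.le hA0
  have hApos : 0 < A := by nlinarith [sq_nonneg ‖x - y‖]
  have hu := one_sub_norm_sq_pos hx
  rw [hypSinhSqHalf, norm_sub_hypMidpoint_sq hx hy hs0.le hA0 hs hA,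
    one_sub_norm_hypMidpoint_sq hx hy hs0.le hA0 hs hA]
  field_simp

theorem hypDist_left_hypMidpoint (hx : ‖x‖ < 1) (hy : ‖y‖ < 1) (hs0 : 0 < s) (hA0 : 0 ≤ A)
    (hs : s ^ 2 = (1 - ‖x‖ ^ 2) * (1 - ‖y‖ ^ 2)) (hA : A ^ 2 = ‖x - y‖ ^ 2 + s ^ 2) :
    hypDist x (hypMidpoint x y A s) = hypDist x y / 2 := by
  have hsA : s ≤ A := by nlinarith [sq_nonneg ‖x - y‖]
  have hxm := hypSinhSqHalf_left_hypMidpoint hx hy hs0 hA0 hs hA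
  apply hypDist_eq_half_of_hypSinhSqHalf
  · rw [hxm]
    exact div_nonneg (sub_nonneg.2 hsA) (by positivity)
  · rw [hxm, hypSinhSqHalf_eq_of_sq_eq hs0.ne' hs hA]
    field_simp
    ring

end Midpoint

theorem stmt16 (x y : ℂ) (hx : ‖x‖ < 1) (hy : ‖y‖ < 1)
    (A : ℝ)
    (hA : A = Real.sqrt (‖x - y‖ ^ 2 + (1 - ‖x‖ ^ 2) * (1 - ‖y‖ ^ 2)))
    (m : ℂ)
    (hm : m = (y * ((1 - ‖x‖ ^ 2 : ℝ) : ℂ) + x * ((1 - ‖y‖ ^ 2 : ℝ) : ℂ)) /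
      (((1 - ‖x‖ ^ 2 * ‖y‖ ^ 2 +
          A * Real.sqrt ((1 - ‖x‖ ^ 2) * (1 - ‖y‖ ^ 2)) : ℝ)) : ℂ)) :
    ‖m‖ < 1 ∧ hypDist x m = hypDist x y / 2 ∧ hypDist m y = hypDist x y / 2 := by
  have huv : 0 < (1 - ‖x‖ ^ 2) * (1 - ‖y‖ ^ 2) :=
    mul_pos (one_sub_norm_sq_pos hx) (one_sub_norm_sq_pos hy)
  set s := √((1 - ‖x‖ ^ 2) * (1 - ‖y‖ ^ 2))
  have hs0 : 0 < s := sqrt_pos.2 huv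
  have hs : s ^ 2 = (1 - ‖x‖ ^ 2) * (1 - ‖y‖ ^ 2) := sq_sqrt huv.le
  have hA0 : 0 ≤ A := hA ▸ sqrt_nonneg _
  have hA2 : A ^ 2 = ‖x - y‖ ^ 2 + s ^ 2 := by
    rw [hA, hs, sq_sqrt (by positivity)]
  have hs' : s ^ 2 = (1 - ‖y‖ ^ 2) * (1 - ‖x‖ ^ 2) := by rw [hs, mul_comm]
  have hA2' : A ^ 2 = ‖y - x‖ ^ 2 + s ^ 2 := by rw [hA2, norm_sub_rev]
  obtain rfl : m = hypMidpoint x y A s := hm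
  refine ⟨norm_hypMidpoint_lt_one hx hy hs0 hA0 hs hA2,
    hypDist_left_hypMidpoint hx hy hs0 hA0 hs hA2, ?_⟩
  rw [hypDist_comm, hypDist_comm x, ← hypMidpoint_comm]
  exact hypDist_left_hypMidpoint hy hx hs0 hA0 hs' hA2'
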